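/- arXiv:2505.05264 — 2 statements merged into one kernel-verified Lean document; each statement's English description precedes it below -/
import Mathlib

section
/- Every subgraph of the 3-dimensional hypercube Q_3 with at least 10 edges contains the balanced double star S_{2,2} as a subgraph. -/
open SimpleGraph

/-- The `n`-dimensional hypercube: vertices are `{0,1}^n`, adjacent iff they
differ in exactly one coordinate (Hamming distance 1). -/
def cube (n : ℕ) : SimpleGraph (Fin n → Bool) where
  Adj x y := hammingDist x y = 1
  symm := ⟨fun x y h => by rwa [hammingDist_comm]⟩
  loopless := ⟨fun x h => by simp [hammingDist_self] at h⟩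

/-- The double star `S_{k,l}`: an edge `uv` (here `Sum.inl none` and
`Sum.inr none`) with `k` leaves attached to `u` and `l` further leaves
attached to `v`. -/
def doubleStar (k l : ℕ) : SimpleGraph (Option (Fin k) ⊕ Option (Fin l)) :=
  SimpleGraph.fromRel (fun a b =>
    (a = Sum.inl none ∧ b = Sum.inr none) ∨
    (a = Sum.inl none ∧ ∃ i, b = Sum.inl (some i)) ∨
    (a = Sum.inr none ∧ ∃ j, b = Sum.inr (some j)))

/-- `G` contains `H` as a (not necessarily induced) subgraph. -/
def Contains {α β : Type*} (G : SimpleGraph α) (H : SimpleGraph β) : Prop :=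
  ∃ f : β ↪ α, ∀ a b, H.Adj a b → G.Adj (f a) (f b)

/-- The Turán number of `H` in the hypercube `Q_n`: the maximum number of
edges of an `H`-free subgraph of `Q_n`. -/
noncomputable def exQ (n : ℕ) {β : Type*} (H : SimpleGraph β) : ℕ :=
  sSup {m | ∃ G : SimpleGraph (Fin n → Bool),
    G ≤ cube n ∧ ¬ Contains G H ∧ G.edgeSet.ncard = m}

/-- Number of coordinates equal to `1` (Hamming weight). -/
def wt {n : ℕ} (x : Fin n → Bool) : ℕ := hammingDist x (fun _ => false)

/-! A subgraph `G` of `Q₃` with at least 10 of its 12 edges misses at most two edges. In a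
3-regular graph an edge meets exactly 5 edges (itself included), so the missing edges meet at most
10 edges of `Q₃`, and some edge `uv` of `Q₃` meets none of them: `u` and `v` keep all three of their
neighbours in `G`. Since `Q₃` is triangle-free, the two further neighbours of `u` and the two of `v`
are four distinct vertices, and together with `uv` they span `S_{2,2}`. -/

open Finset

namespace SimpleGraph

variable {V : Type*} [Fintype V] [DecidableEq V]

theorem card_incidenceFinset_union_of_adj (G : SimpleGraph V) [DecidableRel G.Adj] {a b : V}
    (h : G.Adj a b) :
    #(G.incidenceFinset a ∪ G.incidenceFinset b) = G.degree a + G.degree b - 1 := by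
  have hinter : G.incidenceFinset a ∩ G.incidenceFinset b = {s(a, b)} := by
    apply coe_injective
    push_cast
    simp only [G.incidenceSet_inter_incidenceSet_of_adj h]
  have := card_union_add_card_inter (G.incidenceFinset a) (G.incidenceFinset b)
  rw [hinter, card_singleton, card_incidenceFinset_eq_degree, card_incidenceFinset_eq_degree] at this
  omega

theorem exists_adj_forall_notMem_of_card_lt {H : SimpleGraph V} [DecidableRel H.Adj] {d : ℕ}
    (hH : H.IsRegularOfDegree d) {M : Finset (Sym2 V)} (hM : M ⊆ H.edgeFinset)
    (hcard : (2 * d - 1) * #M < #H.edgeFinset) :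
    ∃ u v, H.Adj u v ∧ ∀ e ∈ M, u ∉ e ∧ v ∉ e := by
  set touching := M.biUnion fun e => e.toFinset.biUnion fun x => H.incidenceFinset x
  have hle : #touching ≤ (2 * d - 1) * #M := by
    rw [mul_comm]
    refine card_biUnion_le_card_mul _ _ _ fun e he => ?_
    induction e using Sym2.ind with
    | _ a b =>
      have hab : H.Adj a b := by simpa using hM he
      rw [Sym2.toFinset_mk_eq, biUnion_insert, singleton_biUnion,
        card_incidenceFinset_union_of_adj H hab, hH.degree_eq, hH.degree_eq, two_mul]
  obtain ⟨f, hf, hft⟩ := exists_mem_notMem_of_card_lt_card (hle.trans_lt hcard)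
  induction f using Sym2.ind with
  | _ u v =>
    have huv : H.Adj u v := by simpa using hf
    refine ⟨u, v, huv, fun e he => ⟨fun hu => hft ?_, fun hv => hft ?_⟩⟩
    · exact mem_biUnion.2 ⟨e, he, mem_biUnion.2 ⟨u, by simpa using hu,
        (mem_incidenceFinset _ _ _).2 (H.mk'_mem_incidenceSet_left_iff.2 huv)⟩⟩
    · exact mem_biUnion.2 ⟨e, he, mem_biUnion.2 ⟨v, by simpa using hv,
        (mem_incidenceFinset _ _ _).2 (H.mk'_mem_incidenceSet_right_iff.2 huv)⟩⟩

theorem neighborFinset_subset_of_forall_notMem {G H : SimpleGraph V} [DecidableRel G.Adj]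
    [DecidableRel H.Adj] {w : V} (hw : ∀ e ∈ H.edgeFinset \ G.edgeFinset, w ∉ e) :
    H.neighborFinset w ⊆ G.neighborFinset w := by
  intro x hx
  by_contra hGx
  exact hw s(w, x) (by simp_all) (Sym2.mem_mk_left w x)

theorem contains_doubleStar_of_adj {G : SimpleGraph V} [DecidableRel G.Adj] {u v : V} {k l : ℕ}
    (huv : G.Adj u v) (hdisj : Disjoint (G.neighborFinset u) (G.neighborFinset v))
    (hu : k < G.degree u) (hv : l < G.degree v) : Contains G (doubleStar k l) := by
  obtain ⟨f, hf⟩ := Function.Embedding.exists_of_card_le_finset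
    (α := Fin k) (s := (G.neighborFinset u).erase v) (by simp [card_erase_of_mem, huv]; omega)
  obtain ⟨g, hg⟩ := Function.Embedding.exists_of_card_le_finset
    (α := Fin l) (s := (G.neighborFinset v).erase u) (by simp [card_erase_of_mem, huv.symm]; omega)
  simp only [Set.range_subset_iff, mem_coe, mem_erase, mem_neighborFinset] at hf hg
  have hfg i j : f i ≠ g j := fun h =>
    Finset.disjoint_left.1 hdisj (by simpa using (hf i).2) (by simpa [h] using (hg j).2)
  have hfu i : f i ≠ u := (hf i).2.ne.symm
  have hgv j : g j ≠ v := (hg j).2.ne.symm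
  refine ⟨⟨Sum.elim (fun o => o.elim u f) (fun o => o.elim v g), ?_⟩, ?_⟩
  · rintro ((_ | i) | (_ | i)) ((_ | j) | (_ | j)) h <;>
      simp_all [huv.ne, huv.ne.symm, (hfu _).symm, (hgv _).symm, ((hf _).1).symm, ((hg _).1).symm,
        (hfg _ _).symm]
  · rintro a b ⟨-, (⟨rfl, rfl⟩ | ⟨rfl, i, rfl⟩ | ⟨rfl, j, rfl⟩) |
      (⟨rfl, rfl⟩ | ⟨rfl, i, rfl⟩ | ⟨rfl, j, rfl⟩)⟩
    exacts [huv, (hf i).2, (hg j).2, huv.symm, (hf i).2.symm, (hg j).2.symm]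

end SimpleGraph

instance (n : ℕ) : DecidableRel (cube n).Adj := fun x y =>
  inferInstanceAs (Decidable (hammingDist x y = 1))

theorem cube_three_isRegularOfDegree : (cube 3).IsRegularOfDegree 3 := by
  intro v; revert v; decide

theorem cube_three_disjoint_neighborFinset_of_adj {u v : Fin 3 → Bool} :
    (cube 3).Adj u v → Disjoint ((cube 3).neighborFinset u) ((cube 3).neighborFinset v) := by
  revert u v; decide

theorem cube_three_card_edgeFinset : #(cube 3).edgeFinset = 12 := by
  have := (cube 3).sum_degrees_eq_twice_card_edges
  simp [cube_three_isRegularOfDegree.degree_eq] at this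
  omega

/-- every subgraph of `Q_3` with at least 10 edges contains `S_{2,2}`. -/
theorem stmt1 (G : SimpleGraph (Fin 3 → Bool)) (hG : G ≤ cube 3)
    (he : 10 ≤ G.edgeSet.ncard) : Contains G (doubleStar 2 2) := by
  classical
  rw [← coe_edgeFinset, Set.ncard_coe_finset] at he
  have hmissing : #((cube 3).edgeFinset \ G.edgeFinset) ≤ 2 := by
    rw [card_sdiff_of_subset (edgeFinset_mono hG), cube_three_card_edgeFinset]
    omega
  obtain ⟨u, v, huv, hfull⟩ := exists_adj_forall_notMem_of_card_lt cube_three_isRegularOfDegree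
    (sdiff_subset (t := G.edgeFinset)) (by rw [cube_three_card_edgeFinset]; omega)
  have hu := neighborFinset_subset_of_forall_notMem fun e he => (hfull e he).1
  have hv := neighborFinset_subset_of_forall_notMem fun e he => (hfull e he).2
  have hle w : G.neighborFinset w ⊆ (cube 3).neighborFinset w := fun x hx => by
    simpa using hG (by simpa using hx)
  have hdeg w (hw : (cube 3).neighborFinset w ⊆ G.neighborFinset w) : 2 < G.degree w :=
    calc 2 < (cube 3).degree w := by rw [cube_three_isRegularOfDegree.degree_eq]; norm_num
      _ ≤ G.degree w := card_le_card hw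
  exact contains_doubleStar_of_adj ((mem_neighborFinset _ _ _).1 (hu (by simpa using huv)))
    ((cube_three_disjoint_neighborFinset_of_adj huv).mono (hle u) (hle v)) (hdeg u hu) (hdeg v hv)
end

section
/- Let n ≥ 3 and let G be an S_{n-1,n-1}-free subgraph of Q_n with the maximum number of edges among all such subgraphs. Then there exists an S_{n-1,n-1}-free subgraph G' of Q_n with e(G') = e(G) and minimum degree δ(G') ≥ n−1. -/
open SimpleGraph

/-!
Because `Q_n` is triangle-free, a subgraph contains `S_{n-1,n-1}` exactly when it has a heavy
edge, one whose two ends both have degree `n`. Let `G` be edge-maximum without heavy edges and let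
`v` have degree `< n - 1`. Some cube edge `uv` is missing from `G`, and adding it creates a heavy
edge; since `v` stays below degree `n`, that edge is `ux` for some `x ≠ v` of degree `n`.
Rotating `ux` to `uv` keeps the number of edges, creates no heavy edge (`u`, `v` and `x` end up
with degree at most `n - 1`) and strictly lowers the total deficiency `∑_w (n - 1 - d(w))⁺`,
so finitely many rotations reach minimum degree `n - 1`.
-/

namespace SimpleGraph

variable {V : Type*} {G H : SimpleGraph V} {u v w x : V}

section EdgeModification

lemma neighborSet_edge_left (h : u ≠ v) : (edge u v).neighborSet u = {v} := by
  ext y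
  simp only [mem_neighborSet, edge_adj, Set.mem_singleton_iff]
  grind

lemma neighborSet_edge_of_ne (hu : w ≠ u) (hv : w ≠ v) : (edge u v).neighborSet w = ∅ := by
  ext y
  simp [edge_adj, hu, hv]

lemma neighborSet_sup_edge_left (h : u ≠ v) :
    (G ⊔ edge u v).neighborSet u = insert v (G.neighborSet u) := by
  rw [neighborSet_sup, neighborSet_edge_left h, Set.union_singleton]

lemma neighborSet_sup_edge_right (h : u ≠ v) :
    (G ⊔ edge u v).neighborSet v = insert u (G.neighborSet v) := by
  rw [edge_comm, neighborSet_sup_edge_left h.symm]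

lemma neighborSet_sup_edge_of_ne (hu : w ≠ u) (hv : w ≠ v) :
    (G ⊔ edge u v).neighborSet w = G.neighborSet w := by
  rw [neighborSet_sup, neighborSet_edge_of_ne hu hv, Set.union_empty]

lemma neighborSet_sdiff_edge_left (h : u ≠ v) :
    (G \ edge u v).neighborSet u = G.neighborSet u \ {v} := by
  rw [neighborSet_sdiff, neighborSet_edge_left h]

lemma neighborSet_sdiff_edge_right (h : u ≠ v) :
    (G \ edge u v).neighborSet v = G.neighborSet v \ {u} := by
  rw [edge_comm, neighborSet_sdiff_edge_left h.symm]

lemma neighborSet_sdiff_edge_of_ne (hu : w ≠ u) (hv : w ≠ v) :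
    (G \ edge u v).neighborSet w = G.neighborSet w := by
  rw [neighborSet_sdiff, neighborSet_edge_of_ne hu hv, Set.sdiff_empty]

lemma edgeSet_sup_edge (h : u ≠ v) : (G ⊔ edge u v).edgeSet = insert s(u, v) G.edgeSet := by
  rw [edgeSet_sup, edgeSet_edge_of_ne h, Set.union_singleton]

lemma ncard_edgeSet_sdiff_edge (h : G.Adj u v) :
    (G \ edge u v).edgeSet.ncard = G.edgeSet.ncard - 1 := by
  rw [edgeSet_sdiff, edgeSet_edge_of_ne h.ne,
    Set.ncard_sdiff_singleton_of_mem ((mem_edgeSet G).mpr h)]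

variable [Finite V]

lemma ncard_edgeSet_sup_edge (h : u ≠ v) (hn : ¬G.Adj u v) :
    (G ⊔ edge u v).edgeSet.ncard = G.edgeSet.ncard + 1 := by
  rw [edgeSet_sup_edge h, Set.ncard_insert_of_notMem ((mem_edgeSet G).not.mpr hn)]

lemma ncard_neighborSet_lt_of_not_adj (hGH : G ≤ H) (hH : H.Adj u v) (hG : ¬G.Adj u v) :
    (G.neighborSet u).ncard < (H.neighborSet u).ncard :=
  Set.ncard_lt_ncard ⟨neighborSet_mono hGH u, fun hsub => hG (hsub hH)⟩

lemma exists_adj_not_adj_of_ncard_lt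
    (h : (G.neighborSet u).ncard < (H.neighborSet u).ncard) : ∃ v, H.Adj u v ∧ ¬G.Adj u v := by
  by_contra! hcon
  exact h.not_ge (Set.ncard_le_ncard hcon)

end EdgeModification

section DoubleStar

def HasHeavyEdge (G : SimpleGraph V) (k : ℕ) : Prop :=
  ∃ a b, G.Adj a b ∧ k < (G.neighborSet a).ncard ∧ k < (G.neighborSet b).ncard

variable [Finite V] {k l : ℕ}

lemma lt_ncard_neighborSet_of_embedding (f : Option (Fin k) ↪ V) (hf : ∀ o, G.Adj u (f o)) :
    k < (G.neighborSet u).ncard := by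
  have h := Set.ncard_le_ncard (Set.range_subset_iff.mpr hf)
  rwa [Set.ncard_range_of_injective f.injective, Nat.card_eq_fintype_card,
    Fintype.card_option, Fintype.card_fin, Nat.succ_le_iff] at h

lemma exists_fin_embedding_of_le_ncard {s : Set V} (h : k ≤ s.ncard) :
    ∃ f : Fin k ↪ V, ∀ i, f i ∈ s := by
  have := s.toFinite.fintype
  obtain ⟨f⟩ := Function.Embedding.nonempty_of_card_le (α := Fin k) (β := s)
    (by rwa [Fintype.card_fin, ← Nat.card_eq_fintype_card])
  exact ⟨f.trans (Function.Embedding.subtype _), fun i => (f i).2⟩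

/-- In a triangle-free graph the leaves at the two centres of a double star can be chosen
independently, since no vertex is adjacent to both ends of an edge. -/
theorem contains_doubleStar_iff (hG : G.CliqueFree 3) :
    Contains G (doubleStar k l) ↔
      ∃ a b, G.Adj a b ∧ k < (G.neighborSet a).ncard ∧ l < (G.neighborSet b).ncard := by
  constructor
  · rintro ⟨f, hf⟩
    refine ⟨f (.inl none), f (.inr none), hf _ _ (by simp [doubleStar]), ?_, ?_⟩
    · refine lt_ncard_neighborSet_of_embedding
        (((Function.Embedding.some.trans .inl).optionElim (.inr none) (by simp)).trans f) ?_
      rintro (_ | i) <;> exact hf _ _ (by simp [doubleStar])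
    · refine lt_ncard_neighborSet_of_embedding
        (((Function.Embedding.some.trans .inr).optionElim (.inl none) (by simp)).trans f) ?_
      rintro (_ | i) <;> exact hf _ _ (by simp [doubleStar])
  · rintro ⟨a, b, hab, ha, hb⟩
    obtain ⟨g, hg⟩ := exists_fin_embedding_of_le_ncard (k := k) (s := G.neighborSet a \ {b})
      (by rw [Set.ncard_sdiff_singleton_of_mem (show b ∈ G.neighborSet a from hab)]; omega)
    obtain ⟨h, hh⟩ := exists_fin_embedding_of_le_ncard (k := l) (s := G.neighborSet b \ {a})
      (by rw [Set.ncard_sdiff_singleton_of_mem (show a ∈ G.neighborSet b from hab.symm)]; omega)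
    let fa := g.optionElim a fun ⟨i, hi⟩ => G.loopless.irrefl a (hi ▸ (hg i).1)
    let fb := h.optionElim b fun ⟨j, hj⟩ => G.loopless.irrefl b (hj ▸ (hh j).1)
    have hdisj : ∀ p q, fa p ≠ fb q := by
      rintro (_ | i) (_ | j) he <;> simp only [fa, fb, Function.Embedding.optionElim_apply,
        Option.elim'] at he
      · exact hab.ne he
      · exact (hh j).2 he.symm
      · exact (hg i).2 he
      · exact isIndepSet_neighborSet_of_triangleFree G hG (g i) (hg i).1.symm
          (he ▸ (hh j).1.symm) hab.ne hab
    refine ⟨⟨Sum.elim fa fb, fa.injective.sumElim fb.injective hdisj⟩, fun p q hpq => ?_⟩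
    have hrel : ∀ p q, (p = .inl none ∧ q = .inr none ∨
        (p = .inl none ∧ ∃ i, q = .inl (some i)) ∨ (p = .inr none ∧ ∃ j, q = .inr (some j))) →
        G.Adj (Sum.elim fa fb p) (Sum.elim fa fb q) := by
      rintro p q (⟨rfl, rfl⟩ | ⟨rfl, i, rfl⟩ | ⟨rfl, j, rfl⟩) <;>
        simp only [Sum.elim_inl, Sum.elim_inr, fa, fb, Function.Embedding.optionElim_apply,
          Option.elim']
      · exact hab
      · exact (hg i).1
      · exact (hh j).1
    obtain ⟨-, hr | hr⟩ := (fromRel_adj _ p q).mp hpq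
    · exact hrel p q hr
    · exact (hrel q p hr).symm

end DoubleStar

section Rotation

def rotateEdge (G : SimpleGraph V) (u x v : V) : SimpleGraph V := (G ⊔ edge u v) \ edge u x

lemma rotateEdge_le (hGH : G ≤ H) (huv : H.Adj u v) : G.rotateEdge u x v ≤ H :=
  sdiff_le.trans (sup_le hGH ((edge_le_iff (G := H)).mpr (.inr huv)))

lemma not_rotateEdge_adj : ¬(G.rotateEdge u x v).Adj u x := fun h =>
  ((sdiff_adj _ _ _ _).mp h).2 ((edge_adj ..).mpr ⟨.inl ⟨rfl, rfl⟩, h.ne⟩)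

lemma neighborSet_rotateEdge_of_ne (hu : w ≠ u) (hv : w ≠ v) (hx : w ≠ x) :
    (G.rotateEdge u x v).neighborSet w = G.neighborSet w := by
  rw [rotateEdge, neighborSet_sdiff_edge_of_ne hu hx, neighborSet_sup_edge_of_ne hu hv]

lemma ncard_neighborSet_rotateEdge_old (hux : G.Adj u x) (hxv : x ≠ v) :
    ((G.rotateEdge u x v).neighborSet x).ncard = (G.neighborSet x).ncard - 1 := by
  rw [rotateEdge, neighborSet_sdiff_edge_right hux.ne, neighborSet_sup_edge_of_ne hux.ne.symm hxv,
    Set.ncard_sdiff_singleton_of_mem (show u ∈ G.neighborSet x from hux.symm)]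

variable [Finite V]

lemma ncard_edgeSet_rotateEdge (hux : G.Adj u x) (hnuv : ¬G.Adj u v) (huv : u ≠ v) :
    (G.rotateEdge u x v).edgeSet.ncard = G.edgeSet.ncard := by
  rw [rotateEdge, ncard_edgeSet_sdiff_edge (Or.inl hux), ncard_edgeSet_sup_edge huv hnuv,
    Nat.add_sub_cancel]

lemma ncard_neighborSet_rotateEdge_pivot (hux : G.Adj u x) (hnuv : ¬G.Adj u v) (huv : u ≠ v) :
    ((G.rotateEdge u x v).neighborSet u).ncard = (G.neighborSet u).ncard := by
  rw [rotateEdge, neighborSet_sdiff_edge_left hux.ne, neighborSet_sup_edge_left huv,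
    Set.ncard_sdiff_singleton_of_mem
      (Set.mem_insert_of_mem _ (show x ∈ G.neighborSet u from hux)),
    Set.ncard_insert_of_notMem (show v ∉ G.neighborSet u from hnuv), Nat.add_sub_cancel]

lemma ncard_neighborSet_rotateEdge_new (hnuv : ¬G.Adj u v) (huv : u ≠ v) (hxv : x ≠ v) :
    ((G.rotateEdge u x v).neighborSet v).ncard = (G.neighborSet v).ncard + 1 := by
  rw [rotateEdge, neighborSet_sdiff_edge_of_ne huv.symm hxv.symm, neighborSet_sup_edge_right huv,
    Set.ncard_insert_of_notMem fun h => hnuv h.symm]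

end Rotation

section HeavyEdges

variable {k : ℕ}

lemma HasHeavyEdge.of_neighborSet_eq {G' : SimpleGraph V} (h : HasHeavyEdge G' k)
    (heq : ∀ w, k < (G'.neighborSet w).ncard → G'.neighborSet w = G.neighborSet w) :
    HasHeavyEdge G k := by
  obtain ⟨a, b, hab, ha, hb⟩ := h
  refine ⟨a, b, ?_, heq a ha ▸ ha, heq b hb ▸ hb⟩
  rw [← mem_neighborSet, ← heq a ha]
  exact hab

variable [Finite V]

/-- By maximality `G ⊔ edge u v` has a heavy edge, and the degree bound on `v` forces it
to be `ux`. -/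
lemma exists_heavy_neighbor (hGH : G ≤ H) (hfree : ¬HasHeavyEdge G k)
    (hmax : ∀ G' ≤ H, ¬HasHeavyEdge G' k → G'.edgeSet.ncard ≤ G.edgeSet.ncard)
    (huv : H.Adj u v) (hnuv : ¬G.Adj u v) (hv : (G.neighborSet v).ncard < k) :
    ∃ x, G.Adj u x ∧ x ≠ v ∧ k < (G.neighborSet x).ncard := by
  have hheavy : HasHeavyEdge (G ⊔ edge u v) k := by
    by_contra h
    have := hmax _ (sup_le hGH ((edge_le_iff (G := H)).mpr (.inr huv))) h
    rw [ncard_edgeSet_sup_edge huv.ne hnuv] at this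
    omega
  have hv' : ¬k < ((G ⊔ edge u v).neighborSet v).ncard := by
    rw [neighborSet_sup_edge_right huv.ne, Set.ncard_insert_of_notMem fun h => hnuv h.symm]
    omega
  have hpivot : ∀ y, (G ⊔ edge u v).Adj u y → k < ((G ⊔ edge u v).neighborSet y).ncard →
      ∃ x, G.Adj u x ∧ x ≠ v ∧ k < (G.neighborSet x).ncard := by
    intro y huy hy
    have hyv : y ≠ v := by rintro rfl; exact hv' hy
    rw [← mem_neighborSet, neighborSet_sup_edge_left huv.ne] at huy
    have hGuy : G.Adj u y := Set.mem_of_mem_insert_of_ne huy hyv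
    rw [neighborSet_sup_edge_of_ne hGuy.ne.symm hyv] at hy
    exact ⟨y, hGuy, hyv, hy⟩
  obtain ⟨a, b, hab, ha, hb⟩ := hheavy
  by_cases hau : a = u
  · exact hpivot b (hau ▸ hab) hb
  by_cases hbu : b = u
  · exact hpivot a (hbu ▸ hab.symm) ha
  have hav : a ≠ v := by rintro rfl; exact hv' ha
  have hbv : b ≠ v := by rintro rfl; exact hv' hb
  rw [neighborSet_sup_edge_of_ne hau hav] at ha
  rw [neighborSet_sup_edge_of_ne hbu hbv] at hb
  refine absurd ⟨a, b, ?_, ha, hb⟩ hfree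
  rw [← mem_neighborSet, ← neighborSet_sup_edge_of_ne hau hav]
  exact hab

lemma not_hasHeavyEdge_rotateEdge (hGH : G ≤ H) (hH : ∀ w, (H.neighborSet w).ncard ≤ k + 1)
    (hfree : ¬HasHeavyEdge G k) (hux : G.Adj u x) (huv : H.Adj u v) (hnuv : ¬G.Adj u v)
    (hxv : x ≠ v) (hv : (G.neighborSet v).ncard < k) :
    ¬HasHeavyEdge (G.rotateEdge u x v) k := by
  have hle : G.rotateEdge u x v ≤ H := rotateEdge_le hGH huv
  refine fun h => hfree (h.of_neighborSet_eq fun w hw => neighborSet_rotateEdge_of_ne ?_ ?_ ?_)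
  · rintro rfl
    have := ncard_neighborSet_lt_of_not_adj hle (hGH hux) not_rotateEdge_adj
    linarith [hH w]
  · rintro rfl
    rw [ncard_neighborSet_rotateEdge_new hnuv huv.ne hxv] at hw
    omega
  · rintro rfl
    have := ncard_neighborSet_lt_of_not_adj hle (hGH hux.symm) fun h => not_rotateEdge_adj h.symm
    linarith [hH w]

end HeavyEdges

section Deficit

variable [Fintype V] {k : ℕ}

/-- `k - d` truncates at `0`, so only vertices of degree below `k` contribute. -/
noncomputable def degDeficit (G : SimpleGraph V) (k : ℕ) : ℕ :=
  ∑ w, (k - (G.neighborSet w).ncard)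

lemma degDeficit_rotateEdge_lt (hux : G.Adj u x) (hnuv : ¬G.Adj u v) (huv : u ≠ v)
    (hxv : x ≠ v) (hx : k < (G.neighborSet x).ncard) (hv : (G.neighborSet v).ncard < k) :
    (G.rotateEdge u x v).degDeficit k < G.degDeficit k := by
  refine Finset.sum_lt_sum (fun w _ => ?_) ⟨v, Finset.mem_univ v, ?_⟩
  · by_cases hwu : w = u
    · rw [hwu, ncard_neighborSet_rotateEdge_pivot hux hnuv huv]
    by_cases hwv : w = v
    · rw [hwv, ncard_neighborSet_rotateEdge_new hnuv huv hxv]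
      omega
    by_cases hwx : w = x
    · rw [hwx, ncard_neighborSet_rotateEdge_old hux hxv]
      omega
    rw [neighborSet_rotateEdge_of_ne hwu hwv hwx]
  · rw [ncard_neighborSet_rotateEdge_new hnuv huv hxv]
    omega

theorem exists_forall_le_ncard_neighborSet (hH : ∀ w, (H.neighborSet w).ncard = k + 1)
    (hGH : G ≤ H) (hfree : ¬HasHeavyEdge G k)
    (hmax : ∀ G' ≤ H, ¬HasHeavyEdge G' k → G'.edgeSet.ncard ≤ G.edgeSet.ncard) :
    ∃ G' ≤ H, ¬HasHeavyEdge G' k ∧ G'.edgeSet.ncard = G.edgeSet.ncard ∧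
      ∀ w, k ≤ (G'.neighborSet w).ncard := by
  induction hd : G.degDeficit k using Nat.strong_induction_on generalizing G with
  | _ d ih =>
    by_cases hlow : ∀ w, k ≤ (G.neighborSet w).ncard
    · exact ⟨G, hGH, hfree, rfl, hlow⟩
    push Not at hlow
    obtain ⟨v, hv⟩ := hlow
    obtain ⟨u, hvu, hnvu⟩ := exists_adj_not_adj_of_ncard_lt (G := G) (H := H) (u := v)
      (by rw [hH v]; omega)
    have huv : H.Adj u v := hvu.symm
    have hnuv : ¬G.Adj u v := fun h => hnvu h.symm
    obtain ⟨x, hux, hxv, hx⟩ := exists_heavy_neighbor hGH hfree hmax huv hnuv hv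
    have hcard := ncard_edgeSet_rotateEdge hux hnuv huv.ne
    obtain ⟨G', hle, hfree', hcard', hdeg⟩ := ih _
      (hd ▸ degDeficit_rotateEdge_lt hux hnuv huv.ne hxv hx hv) (rotateEdge_le hGH huv)
      (not_hasHeavyEdge_rotateEdge hGH (fun w => (hH w).le) hfree hux huv hnuv hxv hv)
      (fun G'' hle'' hfree'' => hcard ▸ hmax G'' hle'' hfree'') rfl
    exact ⟨G', hle, hfree', hcard'.trans hcard, hdeg⟩

end Deficit

end SimpleGraph

section Cube

lemma hammingDist_eq_one_iff {ι : Type*} [Fintype ι] [DecidableEq ι] {x y : ι → Bool} :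
    hammingDist x y = 1 ↔ ∃ i, Function.update x i (!x i) = y := by
  simp only [hammingDist, Finset.card_eq_one, Finset.eq_singleton_iff_unique_mem,
    Finset.mem_filter, Finset.mem_univ, true_and, funext_iff, Function.update_apply]
  refine exists_congr fun i => ⟨fun ⟨hi, h⟩ j => ?_, fun h => ⟨?_, fun j hj => ?_⟩⟩
  · split_ifs with hj
    · subst hj; revert hi; cases x j <;> cases y j <;> simp
    · by_contra hne; exact hj (h j hne)
  · rw [← h i]; simp
  · by_contra hji; rw [← h j, if_neg hji] at hj; exact hj rfl

lemma hammingDist_cast_zmod_two {ι : Type*} [Fintype ι] (x y : ι → Bool) :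
    (hammingDist x y : ZMod 2) = ∑ i, ((x i).toNat : ZMod 2) + ∑ i, ((y i).toNat : ZMod 2) := by
  rw [hammingDist, Finset.natCast_card_filter, ← Finset.sum_add_distrib]
  refine Finset.sum_congr rfl fun i _ => ?_
  cases x i <;> cases y i <;> decide

/-- The parity of the Hamming weight is a proper 2-colouring of the cube. -/
lemma cube_cliqueFree_three (n : ℕ) : (cube n).CliqueFree 3 := by
  let c : (cube n).Coloring (ZMod 2) := Coloring.mk (fun x => ∑ i, ((x i).toNat : ZMod 2))
    fun {x y} hxy heq => by
      have h := hammingDist_cast_zmod_two x y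
      rw [show hammingDist x y = 1 from hxy, heq, ← two_mul, show (2 : ZMod 2) = 0 from rfl,
        zero_mul, Nat.cast_one] at h
      exact one_ne_zero h
  exact c.colorable.cliqueFree (by simp)

lemma ncard_neighborSet_cube {n : ℕ} (v : Fin n → Bool) :
    ((cube n).neighborSet v).ncard = n := by
  have hnbr : (cube n).neighborSet v = Set.range fun i => Function.update v i (!v i) := by
    ext y
    exact hammingDist_eq_one_iff
  rw [hnbr, Set.ncard_range_of_injective, Nat.card_eq_fintype_card, Fintype.card_fin]
  intro i j hij
  by_contra hne
  have h := congrFun hij i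
  dsimp only at h
  rw [Function.update_self, Function.update_of_ne hne] at h
  exact Bool.not_ne_self _ h

end Cube

/-- an edge-maximum `S_{n-1,n-1}`-free subgraph of `Q_n` (`n ≥ 3`)
can be replaced by one with the same number of edges and minimum degree `≥ n-1`. -/
theorem stmt13 (n : ℕ) (hn : 3 ≤ n) (G : SimpleGraph (Fin n → Bool))
    (hG : G ≤ cube n) (hfree : ¬ Contains G (doubleStar (n - 1) (n - 1)))
    (hmax : ∀ G'' : SimpleGraph (Fin n → Bool), G'' ≤ cube n →
      ¬ Contains G'' (doubleStar (n - 1) (n - 1)) →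
      G''.edgeSet.ncard ≤ G.edgeSet.ncard) :
    ∃ G' : SimpleGraph (Fin n → Bool), G' ≤ cube n ∧
      ¬ Contains G' (doubleStar (n - 1) (n - 1)) ∧
      G'.edgeSet.ncard = G.edgeSet.ncard ∧
      ∀ v, n - 1 ≤ (G'.neighborSet v).ncard := by
  obtain ⟨k, rfl⟩ : ∃ k, n = k + 1 := ⟨n - 1, by omega⟩
  have hfree_iff : ∀ G' ≤ cube (k + 1), Contains G' (doubleStar k k) ↔ G'.HasHeavyEdge k :=
    fun G' hG' => contains_doubleStar_iff ((cube_cliqueFree_three _).anti hG')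
  simp only [Nat.add_sub_cancel] at hfree hmax ⊢
  obtain ⟨G', hG', hfree', hcard, hdeg⟩ :=
    exists_forall_le_ncard_neighborSet ncard_neighborSet_cube hG ((hfree_iff G hG).not.mp hfree)
    fun G'' hG'' hfree'' => hmax G'' hG'' ((hfree_iff G'' hG'').not.mpr hfree'')
  exact ⟨G', hG', (hfree_iff G' hG').not.mpr hfree', hcard, hdeg⟩
end
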